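/- arXiv:1409.1031 — 7 statements merged into one kernel-verified Lean document; each statement's English description precedes it below -/
import Mathlib

section
/- If $X, Y, Z$ are integers satisfying $X^4 + X^2Y^2 + Y^4 = Z^2$, then $X = 0$ or $Y = 0$. -/
/-!
The equation is homogeneous, so it suffices to treat coprime `x, y`; they are not both odd (count
mod 4), say `x` odd and `y` even. Then `(z, x y, x² + y²)` is a primitive Pythagorean triple, so
`x² + y² = m² + n²` and `x y = 2 m n`. Writing `x = g c`, `m = g d`, `n = c e`, `y = 2 d e`, the
first relation forces either `g² + (2d)² = c² = d² + e²` or `c² + (2e)² = g² = e² + d²`.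
Parametrizing the first triple of the pair as `(p² - q², 2pq, p² + q²)` turns the second one into
`p⁴ + p²q² + q⁴ = w²` with `0 < p² + q² ≤ |x|`, and infinite descent concludes.
-/

theorem quartic_ne_sq_of_odd_of_odd {x y z : ℤ} (hx : Odd x) (hy : Odd y) :
    x ^ 4 + x ^ 2 * y ^ 2 + y ^ 4 ≠ z ^ 2 := by
  intro h
  have hsq : (x ^ 2) ^ 2 + (x * y) ^ 2 + (y ^ 2) ^ 2 = z ^ 2 := by linear_combination h
  have hz : Odd z := by
    rw [← Int.odd_pow' two_ne_zero, ← h]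
    simp [Int.odd_add, Int.odd_pow, hx, parity_simps]
  have h1 := Int.sq_mod_four_eq_one_of_odd (hx.pow (n := 2))
  have h2 := Int.sq_mod_four_eq_one_of_odd (hx.mul hy)
  have h3 := Int.sq_mod_four_eq_one_of_odd (hy.pow (n := 2))
  have h4 := Int.sq_mod_four_eq_one_of_odd hz
  omega

theorem exists_quartic_eq_sq_of_pythagorean {a b h w : ℤ} (ha : Odd a) (hab : IsCoprime a b)
    (h₁ : a ^ 2 + (2 * b) ^ 2 = h ^ 2) (h₂ : b ^ 2 + w ^ 2 = h ^ 2) :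
    ∃ p q : ℤ, IsCoprime p q ∧ p ^ 2 + q ^ 2 = |h| ∧ b = p * q ∧
      p ^ 4 + p ^ 2 * q ^ 2 + q ^ 4 = w ^ 2 := by
  have htriple : PythagoreanTriple a (2 * b) |h| := by
    unfold PythagoreanTriple
    linear_combination h₁ - sq_abs h
  have hcop : IsCoprime a (2 * b) := (Int.isCoprime_two_right.mpr ha).mul_right hab
  have ha0 : a ≠ 0 := by rintro rfl; simp at ha
  have hh : 0 < |h| := abs_pos.mpr (by rintro rfl; nlinarith [sq_pos_of_ne_zero ha0, sq_nonneg b])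
  obtain ⟨p, q, -, hb, hpq, hcop', -, -⟩ := htriple.coprime_classification'
    (Int.isCoprime_iff_gcd_eq_one.mp hcop) (Int.odd_iff.mp ha) hh
  have hb' : b = p * q := by linarith
  refine ⟨p, q, Int.isCoprime_iff_gcd_eq_one.mpr hcop', hpq.symm, hb', ?_⟩
  have hw : w ^ 2 = |h| ^ 2 - b ^ 2 := by linear_combination h₂ - sq_abs h
  rw [hw, hpq, hb']
  ring

theorem pythagorean_pair_of_sq_add_sq_eq {g c d e : ℤ} (hg : Odd g) (hc : Odd c)
    (hcd : IsCoprime c d) (hge : IsCoprime g e)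
    (h : (g * c) ^ 2 + (2 * d * e) ^ 2 = (g * d) ^ 2 + (c * e) ^ 2) :
    (g ^ 2 + (2 * d) ^ 2 = c ^ 2 ∧ d ^ 2 + e ^ 2 = c ^ 2) ∨
      (c ^ 2 + (2 * e) ^ 2 = g ^ 2 ∧ e ^ 2 + d ^ 2 = g ^ 2) := by
  obtain ⟨t, ht⟩ : g ^ 2 ∣ c ^ 2 - 4 * d ^ 2 :=
    (hge.pow (m := 2) (n := 2)).dvd_of_dvd_mul_left ⟨c ^ 2 - d ^ 2, by linear_combination -h⟩
  have hg0 : g ^ 2 ≠ 0 := pow_ne_zero 2 (by rintro rfl; simp at hg)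
  have ht' : c ^ 2 - d ^ 2 = e ^ 2 * t :=
    mul_left_cancel₀ hg0 (by linear_combination h + e ^ 2 * ht)
  have ht3 : t ∣ 3 := by
    obtain ⟨r, s, hrs⟩ := hcd.pow (m := 2) (n := 2)
    exact ⟨r * (4 * e ^ 2 - g ^ 2) + s * (e ^ 2 - g ^ 2),
      by linear_combination (-3) * hrs + r * (4 * ht' - ht) + s * (ht' - ht)⟩
  have ht1 : 4 ∣ t - 1 := by
    obtain ⟨k, rfl⟩ := hg
    obtain ⟨l, rfl⟩ := hc
    exact ⟨l ^ 2 + l - d ^ 2 - (k ^ 2 + k) * t, by linear_combination -ht⟩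
  have habs := (Nat.dvd_prime Nat.prime_three).mp (Int.natAbs_dvd_natAbs.mpr ht3)
  obtain rfl | rfl : t = 1 ∨ t = -3 := by omega
  · exact .inl ⟨by linarith, by linarith⟩
  · exact .inr ⟨by linarith, by linarith⟩

theorem exists_sq_add_sq_eq_of_quartic_eq_sq {x y z : ℤ} (hxy : IsCoprime x y) (hx : Odd x)
    (hy : Even y) (h : x ^ 4 + x ^ 2 * y ^ 2 + y ^ 4 = z ^ 2) :
    ∃ m n : ℤ, IsCoprime m n ∧ x ^ 2 + y ^ 2 = m ^ 2 + n ^ 2 ∧ x * y = 2 * (m * n) := by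
  have htriple : PythagoreanTriple z (x * y) (x ^ 2 + y ^ 2) := by
    unfold PythagoreanTriple
    linear_combination -h
  have hcop : IsCoprime z (x * y) := by
    have hx' : IsCoprime x (y ^ 4 + x * (x ^ 3 + x * y ^ 2)) :=
      hxy.pow_right.add_mul_left_right _
    have hy' : IsCoprime y (x ^ 4 + y * (y ^ 3 + x ^ 2 * y)) :=
      hxy.symm.pow_right.add_mul_left_right _
    have : IsCoprime (x * y) (z ^ 2) := by
      rw [← h]
      exact .mul_left (by convert hx' using 1; ring) (by convert hy' using 1; ring)
    exact ((IsCoprime.pow_right_iff two_pos).mp this).symm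
  have hz : Odd z := by
    rw [← Int.odd_pow' two_ne_zero, ← h]
    simp [Int.odd_add, Int.odd_pow, hx, hy, parity_simps]
  have hpos : 0 < x ^ 2 + y ^ 2 := by
    have : x ≠ 0 := by rintro rfl; simp at hx
    positivity
  obtain ⟨m, n, -, hprod, hsum, hmn, -, -⟩ := htriple.coprime_classification'
    (Int.isCoprime_iff_gcd_eq_one.mp hcop) (Int.odd_iff.mp hz) hpos
  exact ⟨m, n, Int.isCoprime_iff_gcd_eq_one.mpr hmn, hsum, by rw [hprod]; ring⟩

theorem exists_smaller_quartic_eq_sq {x y z : ℤ} (hxy : IsCoprime x y) (hx : Odd x) (hy : Even y)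
    (hy0 : y ≠ 0) (h : x ^ 4 + x ^ 2 * y ^ 2 + y ^ 4 = z ^ 2) :
    ∃ p q w : ℤ, IsCoprime p q ∧ p * q ≠ 0 ∧ p ^ 2 + q ^ 2 < x ^ 2 + y ^ 2 ∧
      p ^ 4 + p ^ 2 * q ^ 2 + q ^ 4 = w ^ 2 := by
  obtain ⟨m, n, hmn, hsum, hprod⟩ := exists_sq_add_sq_eq_of_quartic_eq_sq hxy hx hy h
  have hx0 : x ≠ 0 := by rintro rfl; simp at hx
  have hsmall : ∀ k, k ∣ x → |k| < x ^ 2 + y ^ 2 := fun k hk => calc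
    |k| ≤ |x| := Int.le_of_dvd (abs_pos.mpr hx0) ((abs_dvd_abs _ _).mpr hk)
    _ ≤ |x| ^ 2 := Int.le_self_sq _
    _ = x ^ 2 := sq_abs x
    _ < x ^ 2 + y ^ 2 := lt_add_of_pos_right _ (by positivity)
  obtain ⟨g, c, ⟨d, rfl⟩, ⟨e, rfl⟩, rfl⟩ := exists_dvd_and_dvd_of_dvd_mul
    ((Int.isCoprime_two_right.mpr hx).dvd_of_dvd_mul_left ⟨y, hprod.symm⟩ : x ∣ m * n)
  obtain rfl : y = 2 * d * e := mul_left_cancel₀ hx0 (by linear_combination hprod)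
  obtain ⟨hg, hc⟩ := Int.odd_mul.mp hx
  have hd0 : d ≠ 0 := by rintro rfl; simp at hy0
  have he0 : e ≠ 0 := by rintro rfl; simp at hy0
  rcases pythagorean_pair_of_sq_add_sq_eq hg hc hmn.of_mul_left_right.of_mul_right_left.symm
      hxy.of_mul_left_left.of_mul_right_right (by linear_combination hsum) with
    ⟨h₁, h₂⟩ | ⟨h₁, h₂⟩
  · obtain ⟨p, q, hpq, hc_eq, rfl, hw⟩ := exists_quartic_eq_sq_of_pythagorean hg
      hxy.of_mul_left_left.of_mul_right_left.of_mul_right_right h₁ h₂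
    exact ⟨p, q, e, hpq, hd0, hc_eq ▸ hsmall c (dvd_mul_left c g), hw⟩
  · obtain ⟨p, q, hpq, hg_eq, rfl, hw⟩ := exists_quartic_eq_sq_of_pythagorean hc
      hxy.of_mul_left_right.of_mul_right_right h₁ h₂
    exact ⟨p, q, d, hpq, he0, hg_eq ▸ hsmall g (dvd_mul_right g c), hw⟩

theorem eq_zero_or_eq_zero_of_quartic_eq_sq_of_isCoprime {x y z : ℤ} (hxy : IsCoprime x y)
    (h : x ^ 4 + x ^ 2 * y ^ 2 + y ^ 4 = z ^ 2) : x = 0 ∨ y = 0 := by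
  by_contra! hne
  obtain ⟨p, q, w, hpq, hpq0, hlt, hw⟩ : ∃ p q w : ℤ, IsCoprime p q ∧ p * q ≠ 0 ∧
      p ^ 2 + q ^ 2 < x ^ 2 + y ^ 2 ∧ p ^ 4 + p ^ 2 * q ^ 2 + q ^ 4 = w ^ 2 := by
    rcases Int.even_or_odd x with hx | hx <;> rcases Int.even_or_odd y with hy | hy
    · exact absurd (hxy.isUnit_of_dvd' hx.two_dvd hy.two_dvd) (by norm_num [Int.isUnit_iff])
    · obtain ⟨p, q, w, hpq, hpq0, hlt, hw⟩ :=
        exists_smaller_quartic_eq_sq (z := z) hxy.symm hy hx hne.1 (by linear_combination h)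
      exact ⟨p, q, w, hpq, hpq0, by linarith, hw⟩
    · exact exists_smaller_quartic_eq_sq hxy hx hy hne.2 h
    · exact absurd h (quartic_ne_sq_of_odd_of_odd hx hy)
  exact hpq0 (mul_eq_zero.mpr (eq_zero_or_eq_zero_of_quartic_eq_sq_of_isCoprime hpq hw))
termination_by (x ^ 2 + y ^ 2).natAbs
decreasing_by exact Int.natAbs_lt_natAbs_of_nonneg_of_lt (by positivity) hlt

theorem diophantine_x4_x2y2_y4 (X Y Z : ℤ) (h : X^4 + X^2*Y^2 + Y^4 = Z^2) :
    X = 0 ∨ Y = 0 := by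
  rcases eq_or_ne X 0 with hX | hX
  · exact .inl hX
  obtain ⟨g, x, y, hg, hxy, rfl, rfl⟩ := Int.exists_gcd_one' (Int.gcd_pos_of_ne_zero_left Y hX)
  obtain ⟨z, rfl⟩ : (g : ℤ) ^ 2 ∣ Z := (Int.pow_dvd_pow_iff two_ne_zero).mp
    ⟨x ^ 4 + x ^ 2 * y ^ 2 + y ^ 4, by linear_combination -h⟩
  have hxyz : x ^ 4 + x ^ 2 * y ^ 2 + y ^ 4 = z ^ 2 :=
    mul_left_cancel₀ (by positivity : (g : ℤ) ^ 4 ≠ 0) (by linear_combination h)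
  rcases eq_zero_or_eq_zero_of_quartic_eq_sq_of_isCoprime
    (Int.isCoprime_iff_gcd_eq_one.mpr hxy) hxyz with rfl | rfl <;> simp
end

section
/- For all natural numbers $m, \ell$ with $m \neq \ell$, the wavenumber $n = (m^4, m\ell^3)$ belongs to $\Lambda$, witnessed by $(x,y) = (\ell^4, -m^3\ell)$; i.e., $\frac{m^4}{m^8 + m^2\ell^6} - \frac{\ell^4}{\ell^8 + m^6\ell^2} - \frac{m^4 - \ell^4}{(m^4-\ell^4)^2 + (m\ell^3 + m^3\ell)^2} = 0$, with $m^4 \neq 0$, $\ell^4 \neq 0$, and $m^4 - \ell^4 \neq 0$. -/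
/-!
Both denominators of the first two terms are multiples of `S = m⁶ + ℓ⁶`, and the third
denominator factors as `(m² + ℓ²) · S` because `m⁶ + ℓ⁶ = (m² + ℓ²)(m⁴ - m²ℓ² + ℓ⁴)`.
After cancelling, all three terms have denominator `S` and numerators `m²`, `ℓ²`, `m² - ℓ²`.
The identity therefore holds in every field, for all `m, ℓ`; the junk value `x / 0 = 0`
covers the degenerate cases.
-/

section WavenumberIdentity

variable {K : Type*} [Field K]

lemma pow_four_div_sq_mul (a s : K) : a ^ 4 / (a ^ 2 * s) = a ^ 2 / s := by
  rcases eq_or_ne a 0 with rfl | ha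
  · simp
  · rw [show a ^ 4 = a ^ 2 * a ^ 2 by ring, mul_div_mul_left _ _ (pow_ne_zero 2 ha)]

theorem wavenumber_identity (m ℓ : K) :
    m ^ 4 / (m ^ 8 + m ^ 2 * ℓ ^ 6) - ℓ ^ 4 / (ℓ ^ 8 + m ^ 6 * ℓ ^ 2)
      - (m ^ 4 - ℓ ^ 4) / ((m ^ 4 - ℓ ^ 4) ^ 2 + (m * ℓ ^ 3 + m ^ 3 * ℓ) ^ 2) = 0 := by
  set S := m ^ 6 + ℓ ^ 6
  have hfactor : S = (m ^ 2 + ℓ ^ 2) * (m ^ 4 - m ^ 2 * ℓ ^ 2 + ℓ ^ 4) := by ring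
  rw [show m ^ 8 + m ^ 2 * ℓ ^ 6 = m ^ 2 * S by ring,
    show ℓ ^ 8 + m ^ 6 * ℓ ^ 2 = ℓ ^ 2 * S by ring,
    show (m ^ 4 - ℓ ^ 4) ^ 2 + (m * ℓ ^ 3 + m ^ 3 * ℓ) ^ 2 = (m ^ 2 + ℓ ^ 2) * S by ring,
    show m ^ 4 - ℓ ^ 4 = (m ^ 2 + ℓ ^ 2) * (m ^ 2 - ℓ ^ 2) by ring,
    pow_four_div_sq_mul, pow_four_div_sq_mul]
  rcases eq_or_ne (m ^ 2 + ℓ ^ 2) 0 with h | h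
  · simp [hfactor, h]
  · rw [mul_div_mul_left _ _ h]
    ring

end WavenumberIdentity

theorem infinite_elements_in_Lambda (m ℓ : ℕ) (hm : 0 < m) (hℓ : 0 < ℓ) (hne : m ≠ ℓ) :
    ((m : ℚ)^4 / ((m : ℚ)^8 + (m : ℚ)^2 * (ℓ : ℚ)^6)
      - (ℓ : ℚ)^4 / ((ℓ : ℚ)^8 + (m : ℚ)^6 * (ℓ : ℚ)^2)
      - ((m : ℚ)^4 - (ℓ : ℚ)^4) /
          (((m : ℚ)^4 - (ℓ : ℚ)^4)^2 + ((m : ℚ) * (ℓ : ℚ)^3 + (m : ℚ)^3 * (ℓ : ℚ))^2) = 0)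
    ∧ (m : ℤ)^4 ≠ 0 ∧ (ℓ : ℤ)^4 ≠ 0 ∧ (m : ℤ)^4 - (ℓ : ℤ)^4 ≠ 0 := by
  refine ⟨wavenumber_identity _ _, by positivity, by positivity, sub_ne_zero.mpr ?_⟩
  have hpow : m ^ 4 ≠ ℓ ^ 4 := (Nat.pow_left_injective four_ne_zero).ne hne
  exact_mod_cast hpow
end

section
/- Let $n_1, x, y$ be integers with $n_1 > x > 0$ satisfying $y^4 - 2x(n_1-x)y^2 + x^2(n_1-x)^2 - n_1^2 x(n_1-x) = 0$. Then $x(n_1-x)$ is a perfect square, say $x(n_1-x) = p^2$ with $p \in \mathbb{N}$, and moreover $y^2 = p^2 + n_1 p$, so that $p^2 + n_1 p$ is also a perfect square. -/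
/-!
Writing `A = x (n₁ - x)`, the equation says `(y² - A)² = n₁² A`. Hence `n₁ ∣ y² - A`, say
`y² - A = n₁ q`, and cancelling `n₁²` gives `A = q²`. Finally `0 < A < n₁²` gives `|q| < n₁`,
and then `y² = q (q + n₁) ≥ 0` rules out `q < 0`.
-/

theorem exists_eq_mul_and_eq_sq_of_sq_eq_sq_mul {R : Type*} [CommRing R] [IsDomain R]
    [IsIntegrallyClosed R] {m n a : R} (hn : n ≠ 0) (h : m ^ 2 = n ^ 2 * a) :
    ∃ q, m = n * q ∧ a = q ^ 2 := by
  obtain ⟨q, rfl⟩ : n ∣ m := (IsIntegrallyClosed.pow_dvd_pow_iff two_ne_zero).mp ⟨a, h⟩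
  refine ⟨q, rfl, mul_left_cancel₀ (pow_ne_zero 2 hn) ?_⟩
  linear_combination -h

theorem nonneg_of_sq_eq_sq_add_mul {R : Type*} [CommRing R] [LinearOrder R] [IsStrictOrderedRing R]
    {n q y : R} (hn : 0 ≤ n) (hq : q ^ 2 < n ^ 2) (hy : y ^ 2 = q ^ 2 + n * q) : 0 ≤ q := by
  by_contra! hq₀
  have hqn : -n < q := (abs_lt.mp (abs_lt_of_sq_lt_sq hq hn)).1
  nlinarith [sq_nonneg y]

theorem biquadratic_forces_square (n₁ x y : ℤ) (hx : 0 < x) (hxn : x < n₁)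
    (h : y^4 - 2*x*(n₁ - x)*y^2 + x^2*(n₁ - x)^2 - n₁^2 * x * (n₁ - x) = 0) :
    ∃ p : ℕ, x * (n₁ - x) = (p : ℤ)^2 ∧ y^2 = (p : ℤ)^2 + n₁ * p
      ∧ ∃ k : ℤ, (p : ℤ)^2 + n₁ * p = k^2 := by
  set A := x * (n₁ - x)
  have hsq : (y ^ 2 - A) ^ 2 = n₁ ^ 2 * A := by linear_combination h
  obtain ⟨q, hq, hAq⟩ := exists_eq_mul_and_eq_sq_of_sq_eq_sq_mul (by omega) hsq
  have hy : y ^ 2 = q ^ 2 + n₁ * q := by linear_combination hq + hAq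
  have hA : A < n₁ ^ 2 := by nlinarith
  lift q to ℕ using nonneg_of_sq_eq_sq_add_mul (by omega) (hAq ▸ hA) hy
  exact ⟨q, hAq, hy, y, hy.symm⟩
end

section
/- Let $q, r$ be relatively prime positive integers such that $qr(q^2 + qr + r^2)$ is a perfect square. Then there exist positive integers $s, t, u$ with $q = s^2$, $r = t^2$, and $s^4 + s^2 t^2 + t^4 = u^2$. -/
/-! A common prime factor of `q` and `q² + qr + r²` would divide `r²`, so all three factors of
`q r (q² + q r + r²)` are pairwise coprime; by unique factorisation each factor of a square with
pairwise coprime factors is itself a square. -/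

namespace Nat

theorem Coprime.exists_eq_pow_of_mul_eq_pow {a b c k : ℕ} (hab : a.Coprime b)
    (h : a * b = c ^ k) : ∃ d, a = d ^ k :=
  _root_.exists_eq_pow_of_mul_eq_pow (Nat.isUnit_iff.mpr hab) h

theorem Coprime.exists_eq_pow_of_mul_mul_eq_pow {a b c m k : ℕ} (hab : a.Coprime b)
    (hac : a.Coprime c) (hbc : b.Coprime c) (h : a * b * c = m ^ k) :
    (∃ x, a = x ^ k) ∧ (∃ y, b = y ^ k) ∧ (∃ z, c = z ^ k) := by
  obtain ⟨n, hn⟩ := (hac.mul_left hbc).exists_eq_pow_of_mul_eq_pow h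
  obtain ⟨z, hz⟩ := (hac.mul_left hbc).symm.exists_eq_pow_of_mul_eq_pow ((mul_comm _ _).trans h)
  exact ⟨hab.exists_eq_pow_of_mul_eq_pow hn,
    hab.symm.exists_eq_pow_of_mul_eq_pow ((mul_comm _ _).trans hn), z, hz⟩

theorem Coprime.coprime_sq_add_mul_add_sq {q r : ℕ} (h : q.Coprime r) :
    q.Coprime (q ^ 2 + q * r + r ^ 2) := by
  have key := (coprime_add_mul_left_right q (r ^ 2) (q + r)).mpr (h.pow_right 2)
  rwa [show r ^ 2 + q * (q + r) = q ^ 2 + q * r + r ^ 2 by ring] at key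

end Nat

theorem square_product_reduction (q r : ℕ) (hq : 0 < q) (hr : 0 < r)
    (hcop : Nat.Coprime q r) (hsq : ∃ k : ℕ, q * r * (q^2 + q*r + r^2) = k^2) :
    ∃ s t u : ℕ, 0 < s ∧ 0 < t ∧ 0 < u ∧ q = s^2 ∧ r = t^2
      ∧ s^4 + s^2 * t^2 + t^4 = u^2 := by
  obtain ⟨k, hk⟩ := hsq
  have hqc := hcop.coprime_sq_add_mul_add_sq
  have hrc : r.Coprime (q ^ 2 + q * r + r ^ 2) := by
    have key := hcop.symm.coprime_sq_add_mul_add_sq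
    rwa [show r ^ 2 + r * q + q ^ 2 = q ^ 2 + q * r + r ^ 2 by ring] at key
  obtain ⟨⟨s, rfl⟩, ⟨t, rfl⟩, ⟨u, hu⟩⟩ := hcop.exists_eq_pow_of_mul_mul_eq_pow hqc hrc hk
  refine ⟨s, t, u, (pow_pos_iff two_ne_zero).mp hq, (pow_pos_iff two_ne_zero).mp hr,
    (pow_pos_iff two_ne_zero).mp (hu ▸ by positivity), rfl, rfl, ?_⟩
  rw [← hu]
  ring
end

section
/- There are no relatively prime positive integers $q, r$ such that $qr(q^2 + qr + r^2)$ is a perfect square. -/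
theorem exists_sum_sq_eq_of_quartic_eq_sq {x y z : ℤ} (hxy : IsCoprime x y) (hx : Odd x)
    (hy : Even y) (h : x ^ 4 + x ^ 2 * y ^ 2 + y ^ 4 = z ^ 2) :
    ∃ g h : ℤ, IsCoprime g h ∧ x ^ 2 + y ^ 2 = g ^ 2 + h ^ 2 ∧ x * y = 2 * (g * h) := by
  have hzx : IsCoprime z x := by
    rw [← IsCoprime.pow_left_iff two_pos, ← h,
      show x ^ 4 + x ^ 2 * y ^ 2 + y ^ 4 = y ^ 4 + x * (x ^ 3 + x * y ^ 2) by ring,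
      IsCoprime.add_mul_left_left_iff]
    exact hxy.symm.pow_left
  have hzy : IsCoprime z y := by
    rw [← IsCoprime.pow_left_iff two_pos, ← h,
      show x ^ 4 + x ^ 2 * y ^ 2 + y ^ 4 = x ^ 4 + y * (x ^ 2 * y + y ^ 3) by ring,
      IsCoprime.add_mul_left_left_iff]
    exact hxy.pow_left
  have hz : Odd z := by
    rw [← Int.odd_pow' two_ne_zero, ← h]
    simp [Int.odd_add, Int.odd_pow, Int.even_pow, hx, hy]
  have hx0 : x ≠ 0 := by rintro rfl; simp at hx
  obtain ⟨g, h, -, hxy', hsum, hgh, -, -⟩ := PythagoreanTriple.coprime_classification'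
    (show PythagoreanTriple z (x * y) (x ^ 2 + y ^ 2) by
      unfold PythagoreanTriple; linear_combination -h)
    (Int.isCoprime_iff_gcd_eq_one.mp (hzx.mul_right hzy)) (Int.odd_iff.mp hz) (by positivity)
  exact ⟨g, h, Int.isCoprime_iff_gcd_eq_one.mpr hgh, hsum, by linear_combination hxy'⟩

theorem exists_eq_mul_of_mul_eq_two_mul {x y g h : ℤ} (hx : Odd x) (e : x * y = 2 * (g * h)) :
    ∃ a b c d : ℤ, x = a * b ∧ g = a * c ∧ h = b * d ∧ y = 2 * (c * d) := by
  have hdvd : x ∣ g * h := (Int.isCoprime_two_right.mpr hx).dvd_of_dvd_mul_left ⟨y, e.symm⟩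
  obtain ⟨a, b, ⟨c, rfl⟩, ⟨d, rfl⟩, rfl⟩ := exists_dvd_and_dvd_of_dvd_mul hdvd
  have hx0 : a * b ≠ 0 := by rintro h0; simp [h0] at hx
  exact ⟨a, b, c, d, rfl, rfl, rfl, mul_left_cancel₀ hx0 (by linear_combination e)⟩

theorem eq_one_or_eq_neg_three_of_dvd_three {k : ℤ} (h3 : k ∣ 3) (h4 : (k : ZMod 4) = 1) :
    k = 1 ∨ k = -3 := by
  have hle : k ≤ 3 := Int.le_of_dvd three_pos h3
  have hge : -3 ≤ k := neg_le.mp (Int.le_of_dvd three_pos (neg_dvd.mpr h3))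
  interval_cases k <;> first | omega | exact absurd h4 (by decide)

theorem sq_sub_sq_eq_or_eq_neg_three_mul {a b c d : ℤ} (ha : Odd a) (hb : Odd b)
    (hbc : IsCoprime b c) (had : IsCoprime a d)
    (h : a ^ 2 * b ^ 2 + 4 * c ^ 2 * d ^ 2 = a ^ 2 * c ^ 2 + b ^ 2 * d ^ 2) :
    (b ^ 2 - 4 * c ^ 2 = a ^ 2 ∧ b ^ 2 - c ^ 2 = d ^ 2) ∨
      (b ^ 2 - 4 * c ^ 2 = -3 * a ^ 2 ∧ b ^ 2 - c ^ 2 = -3 * d ^ 2) := by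
  have ha0 : a ^ 2 ≠ 0 := by rintro h0; simp [pow_eq_zero_iff two_ne_zero |>.mp h0] at ha
  obtain ⟨k, hk⟩ : a ^ 2 ∣ b ^ 2 - 4 * c ^ 2 :=
    (had.pow (m := 2) (n := 2)).dvd_of_dvd_mul_right ⟨b ^ 2 - c ^ 2, by linear_combination -h⟩
  have hk' : b ^ 2 - c ^ 2 = d ^ 2 * k :=
    mul_left_cancel₀ ha0 (by linear_combination h + d ^ 2 * hk)
  have h3 : k ∣ 3 := by
    obtain ⟨u, v, huv⟩ := hbc.pow (m := 2) (n := 2)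
    exact ⟨u * (4 * d ^ 2 - a ^ 2) + v * (d ^ 2 - a ^ 2), by
      linear_combination -3 * huv + (4 * u + v) * hk' - (u + v) * hk⟩
  have h4 : (k : ZMod 4) = 1 := by
    obtain ⟨i, rfl⟩ := ha
    obtain ⟨j, rfl⟩ := hb
    have key : ∀ i j c k : ZMod 4,
        (2 * j + 1) ^ 2 - 4 * c ^ 2 = (2 * i + 1) ^ 2 * k → k = 1 := by
      decide
    exact key i j c k (by exact_mod_cast congrArg (Int.cast : ℤ → ZMod 4) hk)
  rcases eq_one_or_eq_neg_three_of_dvd_three h3 h4 with rfl | rfl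
  · exact Or.inl ⟨by linear_combination hk, by linear_combination hk'⟩
  · exact Or.inr ⟨by linear_combination hk, by linear_combination hk'⟩

theorem exists_quartic_eq_sq_of_pythagorean_s8 {u v w s : ℤ} (hu : Odd u) (hwv : IsCoprime w v)
    (hw : w ≠ 0) (h : u ^ 2 + (2 * v) ^ 2 = w ^ 2) (hs : w ^ 2 - v ^ 2 = s ^ 2) :
    ∃ m n : ℤ, IsCoprime m n ∧ v = m * n ∧ m ^ 4 + m ^ 2 * n ^ 2 + n ^ 4 = s ^ 2 := by
  have huv : IsCoprime u v := by
    rw [← IsCoprime.pow_left_iff two_pos, ← IsCoprime.add_mul_right_left_iff (z := 4 * v),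
      show u ^ 2 + 4 * v * v = w ^ 2 by linear_combination h]
    exact hwv.pow_left
  have hgcd : Int.gcd u (2 * v) = 1 :=
    Int.isCoprime_iff_gcd_eq_one.mp ((Int.isCoprime_two_right.mpr hu).mul_right huv)
  obtain ⟨m, n, -, hv, hw', hmn, -, -⟩ := PythagoreanTriple.coprime_classification'
    (show PythagoreanTriple u (2 * v) |w| by
      unfold PythagoreanTriple; rw [← sq_abs w] at h; linear_combination h)
    hgcd (Int.odd_iff.mp hu) (abs_pos.mpr hw)
  have hv' : v = m * n := by linarith
  refine ⟨m, n, Int.isCoprime_iff_gcd_eq_one.mpr hmn, hv', ?_⟩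
  rw [← hs, ← sq_abs w, hw', hv']
  ring

theorem exists_smaller_quartic_eq_sq_s8 {x y g h : ℤ} (hx : Odd x) (hgh : IsCoprime g h)
    (h0 : x * y ≠ 0) (e₁ : x ^ 2 + y ^ 2 = g ^ 2 + h ^ 2) (e₂ : x * y = 2 * (g * h)) :
    ∃ m n w : ℤ, IsCoprime m n ∧ m * n ≠ 0 ∧ (m * n).natAbs < (x * y).natAbs ∧
      m ^ 4 + m ^ 2 * n ^ 2 + n ^ 4 = w ^ 2 := by
  obtain ⟨a, b, c, d, rfl, rfl, rfl, rfl⟩ := exists_eq_mul_of_mul_eq_two_mul hx e₂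
  obtain ⟨ha, hb⟩ := Int.odd_mul.mp hx
  have hbc : IsCoprime b c := hgh.of_mul_left_right.of_mul_right_left.symm
  have had : IsCoprime a d := hgh.of_mul_left_left.of_mul_right_right
  simp only [mul_ne_zero_iff] at h0
  obtain ⟨⟨ha0, hb0⟩, -, hc0, hd0⟩ := h0
  have hlt : c.natAbs < (a * b * (2 * (c * d))).natAbs ∧
      d.natAbs < (a * b * (2 * (c * d))).natAbs := by
    have hab := Nat.mul_pos (Int.natAbs_pos.mpr ha0) (Int.natAbs_pos.mpr hb0)
    have hc := Int.natAbs_pos.mpr hc0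
    have hd := Int.natAbs_pos.mpr hd0
    simp only [Int.natAbs_mul, show (2 : ℤ).natAbs = 2 from rfl]
    constructor <;> nlinarith [Nat.mul_pos hab hc, Nat.mul_pos hab hd]
  rcases sq_sub_sq_eq_or_eq_neg_three_mul ha hb hbc had (by linear_combination e₁) with
    ⟨h₁, h₂⟩ | ⟨h₁, h₂⟩
  · obtain ⟨m, n, hmn, rfl, hw⟩ := exists_quartic_eq_sq_of_pythagorean_s8 ha hbc hb0
      (by linear_combination -h₁) h₂
    exact ⟨m, n, d, hmn, hc0, hlt.1, hw⟩
  · obtain ⟨m, n, hmn, rfl, hw⟩ := exists_quartic_eq_sq_of_pythagorean_s8 (s := c) hb had ha0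
      (by linarith) (by linarith)
    exact ⟨m, n, c, hmn, hd0, hlt.2, hw⟩

theorem quartic_ne_sq_of_isCoprime {x y z : ℤ} (hxy : IsCoprime x y) (h0 : x * y ≠ 0) :
    x ^ 4 + x ^ 2 * y ^ 2 + y ^ 4 ≠ z ^ 2 := by
  induction hN : (x * y).natAbs using Nat.strong_induction_on generalizing x y z with
  | _ N ih =>
    have descent : ∀ {x y z : ℤ}, IsCoprime x y → Odd x → Even y → x * y ≠ 0 →
        (x * y).natAbs = N → x ^ 4 + x ^ 2 * y ^ 2 + y ^ 4 ≠ z ^ 2 := by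
      intro x y z hxy hx hy h0 hN h
      obtain ⟨g, h, hgh, e₁, e₂⟩ := exists_sum_sq_eq_of_quartic_eq_sq hxy hx hy h
      obtain ⟨m, n, w, hmn, hmn0, hlt, hw⟩ := exists_smaller_quartic_eq_sq_s8 hx hgh h0 e₁ e₂
      exact ih _ (hN ▸ hlt) hmn hmn0 rfl hw
    rcases Int.even_or_odd x with hx | hx <;> rcases Int.even_or_odd y with hy | hy
    · have := Int.isUnit_iff.mp (hxy.isUnit_of_dvd' hx.two_dvd hy.two_dvd)
      omega
    · intro h
      exact descent (z := z) hxy.symm hy hx (by rwa [mul_comm]) (by rwa [mul_comm])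
        (by linear_combination h)
    · exact descent hxy hx hy h0 hN
    · exact quartic_ne_sq_of_odd_of_odd hx hy

theorem quartic_ne_sq {x y z : ℤ} (hx : x ≠ 0) (hy : y ≠ 0) :
    x ^ 4 + x ^ 2 * y ^ 2 + y ^ 4 ≠ z ^ 2 := by
  obtain ⟨d, x, y, hd, hxy, rfl, rfl⟩ := Int.exists_gcd_one' (Int.gcd_pos_of_ne_zero_left y hx)
  intro h
  obtain ⟨z, rfl⟩ := (Int.pow_dvd_pow_iff two_ne_zero).mp
    (⟨x ^ 4 + x ^ 2 * y ^ 2 + y ^ 4, by linear_combination -h⟩ : ((d : ℤ) ^ 2) ^ 2 ∣ z ^ 2)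
  simp only [mul_ne_zero_iff] at hx hy
  refine quartic_ne_sq_of_isCoprime (z := z) (Int.isCoprime_iff_gcd_eq_one.mpr hxy)
    (mul_ne_zero hx.1 hy.1) (mul_left_cancel₀ (pow_ne_zero 4 hx.2) ?_)
  linear_combination h

theorem no_coprime_square_product :
    ¬ ∃ q r : ℕ, 0 < q ∧ 0 < r ∧ Nat.Coprime q r
      ∧ ∃ k : ℕ, q * r * (q^2 + q*r + r^2) = k^2 := by
  rintro ⟨q, r, hq, hr, hqr, k, hk⟩
  have hqS : Nat.Coprime q (q ^ 2 + q * r + r ^ 2) := by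
    rw [show q ^ 2 + q * r + r ^ 2 = r ^ 2 + (q + r) * q by ring, Nat.coprime_add_mul_right_right]
    exact hqr.pow_right 2
  have hrS : Nat.Coprime r (q ^ 2 + q * r + r ^ 2) := by
    rw [show q ^ 2 + q * r + r ^ 2 = q ^ 2 + (q + r) * r by ring, Nat.coprime_add_mul_right_right]
    exact hqr.symm.pow_right 2
  have hS := Nat.Coprime.mul_left hqS hrS
  obtain ⟨c, hc⟩ := exists_eq_pow_of_mul_eq_pow (Nat.isUnit_iff.mpr hS) hk
  obtain ⟨t, ht⟩ :=
    exists_eq_pow_of_mul_eq_pow (Nat.isUnit_iff.mpr hS.symm) ((mul_comm _ _).trans hk)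
  obtain ⟨a, rfl⟩ := exists_eq_pow_of_mul_eq_pow (Nat.isUnit_iff.mpr hqr) hc
  obtain ⟨b, rfl⟩ :=
    exists_eq_pow_of_mul_eq_pow (Nat.isUnit_iff.mpr hqr.symm) ((mul_comm _ _).trans hc)
  have ha : a ≠ 0 := by rintro rfl; simp at hq
  have hb : b ≠ 0 := by rintro rfl; simp at hr
  refine quartic_ne_sq (x := a) (y := b) (z := t) (by exact_mod_cast ha) (by exact_mod_cast hb) ?_
  exact_mod_cast (by rw [← ht]; ring : a ^ 4 + a ^ 2 * b ^ 2 + b ^ 4 = t ^ 2)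
end

section
/- Suppose $n_1, x, y$ are integers with $n_1 x (n_1 - x) \neq 0$, $y \neq 0$, and $\frac{1}{n_1} = \frac{x}{x^2+y^2} + \frac{n_1-x}{(n_1-x)^2+y^2}$. Let $d = \gcd(n_1, x)$. Then $d$ divides $y$, and $n_1' = n_1/d$, $x' = x/d$, $y' = y/d$ satisfy the same equation $\frac{1}{n_1'} = \frac{x'}{x'^2+y'^2} + \frac{n_1'-x'}{(n_1'-x')^2+y'^2}$. -/
/-!
Clearing denominators turns the equation into `(y² - x(n₁ - x))² = n₁² x (n₁ - x)`. If `d`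
divides `n₁` and `x`, the right side is divisible by `d⁴`, so `d² ∣ y² - x(n₁ - x)` and hence
`d² ∣ y²`, i.e. `d ∣ y` since `ℤ` is integrally closed. Every term of the equation is homogeneous
of degree `-1`, so dividing `n₁`, `x`, `y` by `d` preserves it.
-/

section AxisResonance

variable {K : Type*} [Field K]

def AxisResonance (n x y : K) : Prop :=
  1 / n = x / (x ^ 2 + y ^ 2) + (n - x) / ((n - x) ^ 2 + y ^ 2)

lemma div_div_sq_add_sq_div (a b c : K) :
    a / c / ((a / c) ^ 2 + (b / c) ^ 2) = c * (a / (a ^ 2 + b ^ 2)) := by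
  rcases eq_or_ne c 0 with rfl | hc
  · simp
  rw [div_pow, div_pow, ← add_div, div_div_eq_mul_div, div_mul_eq_mul_div, sq, ← mul_assoc,
    mul_div_cancel_right₀ _ hc, mul_comm a c, mul_div_assoc]

lemma axisResonance_div_iff {n x y c : K} (hc : c ≠ 0) :
    AxisResonance (n / c) (x / c) (y / c) ↔ AxisResonance n x y := by
  rw [AxisResonance, AxisResonance, ← sub_div, div_div_sq_add_sq_div, div_div_sq_add_sq_div,
    one_div_div, ← mul_add, div_eq_mul_one_div, mul_right_inj' hc]

lemma AxisResonance.sq_sub_mul_eq {n x y : K} (h : AxisResonance n x y) (hn : n ≠ 0)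
    (hx : x ^ 2 + y ^ 2 ≠ 0) (hnx : (n - x) ^ 2 + y ^ 2 ≠ 0) :
    (y ^ 2 - x * (n - x)) ^ 2 = n ^ 2 * x * (n - x) := by
  unfold AxisResonance at h
  field_simp at h
  linear_combination h

end AxisResonance

lemma dvd_of_sq_sub_mul_eq {R : Type*} [CommRing R] [IsDomain R] [IsIntegrallyClosed R]
    {d n x y : R} (hdn : d ∣ n) (hdx : d ∣ x)
    (h : (y ^ 2 - x * (n - x)) ^ 2 = n ^ 2 * x * (n - x)) : d ∣ y := by
  have hdnx : d ∣ n - x := dvd_sub hdn hdx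
  have hd2 : d ^ 2 ∣ y ^ 2 - x * (n - x) := by
    rw [← IsIntegrallyClosed.pow_dvd_pow_iff two_ne_zero, ← pow_mul, h]
    calc d ^ (2 * 2) = d ^ 2 * d * d := by ring
      _ ∣ n ^ 2 * x * (n - x) := mul_dvd_mul (mul_dvd_mul (pow_dvd_pow_of_dvd hdn 2) hdx) hdnx
  have hd2x : d ^ 2 ∣ x * (n - x) := sq d ▸ mul_dvd_mul hdx hdnx
  exact (IsIntegrallyClosed.pow_dvd_pow_iff two_ne_zero).mp ((dvd_sub_left hd2x).mp hd2)

theorem scaling_reduction_general (n₁ x y : ℤ) (h0 : n₁ * x * (n₁ - x) ≠ 0)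
    (h : (1 : ℚ) / (n₁ : ℚ) = (x : ℚ) / (x^2 + y^2) + ((n₁ - x : ℤ) : ℚ) / ((n₁ - x)^2 + y^2)) :
    ((Int.gcd n₁ x : ℤ)) ∣ y ∧
    (1 : ℚ) / ((n₁ / (Int.gcd n₁ x : ℤ) : ℤ) : ℚ)
      = ((x / (Int.gcd n₁ x : ℤ) : ℤ) : ℚ)
          / (((x / (Int.gcd n₁ x : ℤ) : ℤ) : ℚ)^2 + ((y / (Int.gcd n₁ x : ℤ) : ℤ) : ℚ)^2)
        + ((n₁ / (Int.gcd n₁ x : ℤ) - x / (Int.gcd n₁ x : ℤ) : ℤ) : ℚ)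
          / (((n₁ / (Int.gcd n₁ x : ℤ) - x / (Int.gcd n₁ x : ℤ) : ℤ) : ℚ)^2
              + ((y / (Int.gcd n₁ x : ℤ) : ℤ) : ℚ)^2) := by
  obtain ⟨⟨hn, hx⟩, hnx⟩ : (n₁ ≠ 0 ∧ x ≠ 0) ∧ n₁ - x ≠ 0 := by
    simpa only [mul_ne_zero_iff] using h0
  have hres : AxisResonance (n₁ : ℚ) x y := by
    rw [AxisResonance]; push_cast at h; exact h
  have hnxQ : (n₁ : ℚ) - x ≠ 0 := by exact_mod_cast hnx
  have hdn : (Int.gcd n₁ x : ℤ) ∣ n₁ := Int.gcd_dvd_left n₁ x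
  have hdx : (Int.gcd n₁ x : ℤ) ∣ x := Int.gcd_dvd_right n₁ x
  have hdy : (Int.gcd n₁ x : ℤ) ∣ y := by
    refine dvd_of_sq_sub_mul_eq hdn hdx ?_
    exact_mod_cast hres.sq_sub_mul_eq (by positivity) (by positivity) (by positivity)
  refine ⟨hdy, ?_⟩
  have hd : ((Int.gcd n₁ x : ℤ) : ℚ) ≠ 0 := by
    exact_mod_cast (Int.gcd_pos_of_ne_zero_left x hn).ne'
  rw [Int.cast_sub, Int.cast_div_charZero hdn, Int.cast_div_charZero hdx,
    Int.cast_div_charZero hdy]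
  exact (axisResonance_div_iff hd).2 hres

theorem scaling_reduction (n₁ x y : ℤ) (h0 : n₁ * x * (n₁ - x) ≠ 0) (hy : y ≠ 0)
    (h : (1 : ℚ) / (n₁ : ℚ) = (x : ℚ) / (x^2 + y^2) + ((n₁ - x : ℤ) : ℚ) / ((n₁ - x)^2 + y^2)) :
    ((Int.gcd n₁ x : ℤ)) ∣ y ∧
    (1 : ℚ) / ((n₁ / (Int.gcd n₁ x : ℤ) : ℤ) : ℚ)
      = ((x / (Int.gcd n₁ x : ℤ) : ℤ) : ℚ)
          / (((x / (Int.gcd n₁ x : ℤ) : ℤ) : ℚ)^2 + ((y / (Int.gcd n₁ x : ℤ) : ℤ) : ℚ)^2)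
        + ((n₁ / (Int.gcd n₁ x : ℤ) - x / (Int.gcd n₁ x : ℤ) : ℤ) : ℚ)
          / (((n₁ / (Int.gcd n₁ x : ℤ) - x / (Int.gcd n₁ x : ℤ) : ℤ) : ℚ)^2
              + ((y / (Int.gcd n₁ x : ℤ) : ℤ) : ℚ)^2) :=
  scaling_reduction_general n₁ x y h0 h
end

section
/- No wavenumber on the $n_1$-axis belongs to $\Lambda$: for every nonzero integer $n_1$, $(n_1, 0) \notin \Lambda$. -/
def Lambda : Set (ℤ × ℤ) :=
  {n | n.1 ≠ 0 ∧ ∃ x y : ℤ, x ≠ 0 ∧ n.1 - x ≠ 0 ∧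
    (n.1 : ℚ) / ((n.1 : ℚ)^2 + (n.2 : ℚ)^2) - (x : ℚ) / ((x : ℚ)^2 + (y : ℚ)^2)
      - ((n.1 - x : ℤ) : ℚ) / (((n.1 - x : ℤ) : ℚ)^2 + ((n.2 - y : ℤ) : ℚ)^2) = 0}

/-!
Clearing denominators, a resonance `(x, y)` of the wavenumber `(n, 0)` satisfies
`(y² - x(n - x))² = x(n - x) n²`. Hence `x(n - x) = t²` with `y² - t² = nt`, and then
`(y² - 3t²)(y² + t²) = (t(2x - n))²`, i.e. `w² + (2t²)² = (y² - t²)²`. After reducing to coprime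
`y, t` (both odd is impossible modulo `16`) this Pythagorean triple is primitive, and its parameters are squares `α², β²` with
`α⁴ + α²β² + β⁴ = y²`, which is impossible for `αβ ≠ 0`.

The quartic is excluded by infinite descent. For a primitive solution `(X, Y, Z)` with `X` odd,
`(Z, XY, X² + Y²)` is a primitive Pythagorean triple with parameters `M, N`; splitting
`X · (Y/2) = M N` by the four-number lemma as `X = x₁x₂`, `Y/2 = y₁y₂`, `M = x₁y₁`, `N = x₂y₂`
forces `x₁² = y₁² + y₂² = x₂² + (2y₂)²`, and the parameters `t, w` of the second triple give
the smaller solution `t⁴ + t²w² + w⁴ = y₁²`.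
-/

theorem Int.exists_eq_mul_of_mul_eq_mul_of_isCoprime {a b c d : ℤ} (ha : 0 < a) (hb : 0 < b)
    (hc : 0 ≤ c) (hd : 0 ≤ d) (hab : IsCoprime a b) (hcd : IsCoprime c d) (h : a * b = c * d) :
    ∃ p q r s : ℤ, 0 < p ∧ 0 < q ∧ 0 < r ∧ 0 < s ∧
      a = p * q ∧ b = r * s ∧ c = p * r ∧ d = q * s := by
  lift a to ℕ using ha.le
  lift b to ℕ using hb.le
  lift c to ℕ using hc
  lift d to ℕ using hd
  rw [Nat.isCoprime_iff_coprime] at hab hcd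
  have h : a * b = c * d := by exact_mod_cast h
  have ha' := Nat.gcd_mul_gcd_of_coprime_of_mul_eq_mul hab h.symm
  have hb' := Nat.gcd_mul_gcd_of_coprime_of_mul_eq_mul hab.symm (h.symm.trans (mul_comm a b))
  have hc' := Nat.gcd_mul_gcd_of_coprime_of_mul_eq_mul hcd h
  have hd' := Nat.gcd_mul_gcd_of_coprime_of_mul_eq_mul hcd.symm (h.trans (mul_comm c d))
  rw [Nat.gcd_comm c, Nat.gcd_comm d] at ha' hb'
  have ha₀ : 0 < a := by exact_mod_cast ha
  have hb₀ : 0 < b := by exact_mod_cast hb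
  refine ⟨a.gcd c, a.gcd d, b.gcd c, b.gcd d, ?_, ?_, ?_, ?_, ?_, ?_, ?_, ?_⟩
  · exact_mod_cast Nat.gcd_pos_of_pos_left _ ha₀
  · exact_mod_cast Nat.gcd_pos_of_pos_left _ ha₀
  · exact_mod_cast Nat.gcd_pos_of_pos_left _ hb₀
  · exact_mod_cast Nat.gcd_pos_of_pos_left _ hb₀
  · exact_mod_cast ha'.symm
  · exact_mod_cast hb'.symm
  · exact_mod_cast hc'.symm
  · exact_mod_cast hd'.symm

lemma Int.exists_eq_mul_and_eq_sq_of_sq_mul_eq_sq {g a w : ℤ} (hg : g ≠ 0)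
    (h : g ^ 2 * a = w ^ 2) : ∃ v, w = g * v ∧ a = v ^ 2 := by
  obtain ⟨v, rfl⟩ := (Int.pow_dvd_pow_iff two_ne_zero).mp ⟨a, h.symm⟩
  exact ⟨v, rfl, mul_left_cancel₀ (pow_ne_zero 2 hg) (by linear_combination h)⟩

lemma Int.exists_sq_of_isCoprime_of_mul_eq_sq {a b c : ℤ} (hab : IsCoprime a b) (ha : 0 ≤ a)
    (h : a * b = c ^ 2) : ∃ d, a = d ^ 2 := by
  obtain ⟨d, hd | hd⟩ := Int.sq_of_isCoprime hab h
  · exact ⟨d, hd⟩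
  · exact ⟨d, by linarith [sq_nonneg d]⟩

lemma Int.odd_or_odd_of_isCoprime {a b : ℤ} (h : IsCoprime a b) : Odd a ∨ Odd b := by
  by_contra! hab
  simp only [Int.not_odd_iff_even] at hab
  have h2 := h.isUnit_of_dvd' hab.1.two_dvd hab.2.two_dvd
  norm_num [Int.isUnit_iff] at h2

lemma IsCoprime.of_sq_eq_pow_add_mul {R : Type*} [CommRing R] {a b c d : R} {n : ℕ}
    (hab : IsCoprime a b) (h : c ^ 2 = a ^ n + b * d) : IsCoprime c b := by
  rw [← IsCoprime.pow_left_iff two_pos, h, IsCoprime.add_mul_left_left_iff]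
  exact hab.pow_left

lemma Int.cast_zmod_eight_sq_of_odd {x : ℤ} (hx : Odd x) : (x : ZMod 8) ^ 2 = 1 := by
  obtain ⟨c, rfl⟩ := hx
  push_cast
  generalize (c : ZMod 8) = c
  revert c
  decide

def QuarticSq (x y z : ℤ) : Prop :=
  x ≠ 0 ∧ y ≠ 0 ∧ x ^ 4 + x ^ 2 * y ^ 2 + y ^ 4 = z ^ 2

lemma QuarticSq.swap {x y z : ℤ} (h : QuarticSq x y z) : QuarticSq y x z :=
  ⟨h.2.1, h.1, by linear_combination h.2.2⟩

lemma exists_pythagorean_params_of_pow_four_add_eq_sq {X Y Z : ℤ} (hX : 0 < X) (hY : 0 < Y)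
    (hcop : IsCoprime X Y) (hXodd : Odd X) (hYeven : Even Y)
    (h : X ^ 4 + X ^ 2 * Y ^ 2 + Y ^ 4 = Z ^ 2) :
    ∃ M N : ℤ, 0 < M ∧ 0 < N ∧ Odd M ∧ IsCoprime M N ∧
      X * Y = 2 * (M * N) ∧ X ^ 2 + Y ^ 2 = M ^ 2 + N ^ 2 := by
  have hZodd : Odd Z := by
    rw [← Int.odd_pow' two_ne_zero, ← h]
    simp [parity_simps, hXodd, hYeven]
  have hZX : IsCoprime Z X :=
    hcop.symm.of_sq_eq_pow_add_mul (n := 4) (d := X ^ 3 + X * Y ^ 2) (by linear_combination -h)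
  have hZY : IsCoprime Z Y :=
    hcop.of_sq_eq_pow_add_mul (n := 4) (d := X ^ 2 * Y + Y ^ 3) (by linear_combination -h)
  have hpyth : PythagoreanTriple Z (X * Y) (X ^ 2 + Y ^ 2) := by
    unfold PythagoreanTriple
    linear_combination -h
  obtain ⟨m, n, -, hXY, hsum, hmn, hpar, hm⟩ := hpyth.coprime_classification'
    (Int.isCoprime_iff_gcd_eq_one.mp (hZX.mul_right hZY)) (Int.odd_iff.mp hZodd) (by positivity)
  have hmn_pos : 0 < m * n := by nlinarith [mul_pos hX hY]
  have hm_pos : 0 < m := hm.lt_of_ne (by rintro rfl; simp at hmn_pos)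
  have hn_pos : 0 < n := pos_of_mul_pos_right hmn_pos hm
  rw [← Int.isCoprime_iff_gcd_eq_one] at hmn
  rcases hpar with ⟨-, hn_odd⟩ | ⟨hm_odd, -⟩
  · exact ⟨n, m, hn_pos, hm_pos, Int.odd_iff.mpr hn_odd, hmn.symm,
      by rw [hXY]; ring, by rw [hsum]; ring⟩
  · exact ⟨m, n, hm_pos, hn_pos, Int.odd_iff.mpr hm_odd, hmn, by rw [hXY]; ring, hsum⟩

lemma sq_eq_add_sq_of_sq_mul_eq_sq_mul {x₁ x₂ y₁ y₂ : ℤ} (hx₁ : Odd x₁) (hx₂ : Odd x₂)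
    (hy₁ : Odd y₁) (hx₁y₂ : IsCoprime x₁ y₂) (hy₁x₂ : IsCoprime y₁ x₂)
    (h : x₁ ^ 2 * (x₂ ^ 2 - y₁ ^ 2) = y₂ ^ 2 * (x₂ ^ 2 - 4 * y₁ ^ 2)) :
    x₁ ^ 2 = y₁ ^ 2 + y₂ ^ 2 ∧ x₁ ^ 2 = x₂ ^ 2 + (2 * y₂) ^ 2 := by
  obtain ⟨k, hk⟩ : x₁ ^ 2 ∣ x₂ ^ 2 - 4 * y₁ ^ 2 := hx₁y₂.pow.dvd_of_dvd_mul_left ⟨_, h.symm⟩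
  have hx₁0 : x₁ ≠ 0 := by rintro rfl; simp at hx₁
  have hk' : x₂ ^ 2 - y₁ ^ 2 = y₂ ^ 2 * k :=
    mul_left_cancel₀ (pow_ne_zero 2 hx₁0) (by rw [h, hk]; ring)
  have hk_dvd : k ∣ 3 := by
    obtain ⟨u, v, huv⟩ := hy₁x₂.pow (m := 2) (n := 2)
    exact ⟨u * (y₂ ^ 2 - x₁ ^ 2) + v * (4 * y₂ ^ 2 - x₁ ^ 2),
      by linear_combination -3 * huv + u * (hk' - hk) + v * (4 * hk' - hk)⟩
  -- odd squares are `1` modulo `8`, so `k ≡ 1 - 4 [ZMOD 8]`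
  have hk_mod : (8 : ℤ) ∣ k + 3 := by
    have h8 := congrArg (Int.cast : ℤ → ZMod 8) hk
    push_cast at h8
    rw [Int.cast_zmod_eight_sq_of_odd hx₁, Int.cast_zmod_eight_sq_of_odd hx₂,
      Int.cast_zmod_eight_sq_of_odd hy₁] at h8
    refine (ZMod.intCast_zmod_eq_zero_iff_dvd _ 8).mp ?_
    push_cast
    linear_combination -h8
  obtain rfl : k = -3 := by
    have := Int.le_of_dvd three_pos hk_dvd
    have := Int.le_of_dvd three_pos (neg_dvd.mpr hk_dvd)
    omega
  constructor <;> linarith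

lemma exists_quarticSq_of_sq_eq_add_sq {a b c d : ℤ} (hc : 0 < c) (hb : b ≠ 0) (hd : Odd d)
    (hdb : IsCoprime d b) (h₁ : c ^ 2 = a ^ 2 + b ^ 2) (h₂ : c ^ 2 = d ^ 2 + (2 * b) ^ 2) :
    ∃ t w, QuarticSq t w a := by
  have hpyth : PythagoreanTriple d (2 * b) c := by
    unfold PythagoreanTriple
    linear_combination -h₂
  obtain ⟨t, w, -, hb', hc', -⟩ := hpyth.coprime_classification'
    (Int.isCoprime_iff_gcd_eq_one.mp ((Int.isCoprime_two_right.mpr hd).mul_right hdb))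
    (Int.odd_iff.mp hd) hc
  replace hb' : b = t * w := by linarith
  refine ⟨t, w, left_ne_zero_of_mul (hb' ▸ hb), right_ne_zero_of_mul (hb' ▸ hb), ?_⟩
  linear_combination h₁ - (c + t ^ 2 + w ^ 2) * hc' + (b + t * w) * hb'

lemma exists_quarticSq_lt_of_odd_of_even {X Y Z : ℤ} (hX : 0 < X) (hY : 0 < Y)
    (hcop : IsCoprime X Y) (hXodd : Odd X) (hYeven : Even Y)
    (h : X ^ 4 + X ^ 2 * Y ^ 2 + Y ^ 4 = Z ^ 2) :
    ∃ x y z, QuarticSq x y z ∧ z.natAbs < Z.natAbs := by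
  obtain ⟨M, N, hM, hN, hModd, hMN, hXY, hsum⟩ :=
    exists_pythagorean_params_of_pow_four_add_eq_sq hX hY hcop hXodd hYeven h
  obtain ⟨H, rfl⟩ := hYeven
  have hXH : IsCoprime X H := hcop.of_isCoprime_of_dvd_right (Dvd.intro_left 2 (two_mul H))
  obtain ⟨x₁, x₂, y₁, y₂, hx₁, -, hy₁, hy₂, rfl, rfl, rfl, rfl⟩ :=
    Int.exists_eq_mul_of_mul_eq_mul_of_isCoprime hX (by linarith) hM.le hN.le hXH hMN
      (by linarith)
  have hx := Int.odd_mul.mp hXodd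
  obtain ⟨hsq₁, hsq₂⟩ := sq_eq_add_sq_of_sq_mul_eq_sq_mul hx.1 hx.2 (Int.odd_mul.mp hModd).2
    hXH.of_mul_left_left.of_mul_right_right hXH.symm.of_mul_left_left.of_mul_right_right
    (by linear_combination hsum)
  obtain ⟨t, w, htw⟩ := exists_quarticSq_of_sq_eq_add_sq hx₁ hy₂.ne' hx.2
    hXH.of_mul_left_right.of_mul_right_right hsq₁ hsq₂
  refine ⟨t, w, y₁, htw, Int.natAbs_lt_iff_sq_lt.mpr ?_⟩
  have hy₁Y : y₁ < y₁ * y₂ + y₁ * y₂ := by nlinarith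
  calc y₁ ^ 2 < (y₁ * y₂ + y₁ * y₂) ^ 2 := by gcongr
    _ ≤ ((y₁ * y₂ + y₁ * y₂) ^ 2) ^ 2 := le_self_pow₀ (one_le_pow₀ (by linarith)) two_ne_zero
    _ ≤ Z ^ 2 := by nlinarith [pow_pos hX 4, mul_pos (pow_pos hX 2) (pow_pos hY 2)]

lemma QuarticSq.exists_lt_of_isCoprime {X Y Z : ℤ} (h : QuarticSq X Y Z) (hcop : IsCoprime X Y) :
    ∃ x y z, QuarticSq x y z ∧ z.natAbs < Z.natAbs := by
  wlog hXodd : Odd X generalizing X Y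
  · exact this h.swap hcop.symm ((Int.odd_or_odd_of_isCoprime hcop).resolve_left hXodd)
  obtain ⟨hX, hY, heq⟩ := h
  have hYeven : Even Y := by
    refine Int.not_odd_iff_even.mp fun hYodd => ?_
    obtain ⟨i, rfl⟩ := hXodd
    obtain ⟨j, rfl⟩ := hYodd
    have h4 := congrArg (Int.cast : ℤ → ZMod 4) heq
    push_cast at h4
    exact (by decide : ∀ a b c : ZMod 4,
      (2 * a + 1) ^ 4 + (2 * a + 1) ^ 2 * (2 * b + 1) ^ 2 + (2 * b + 1) ^ 4 ≠ c ^ 2) _ _ _ h4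
  exact exists_quarticSq_lt_of_odd_of_even (abs_pos.mpr hX) (abs_pos.mpr hY)
    hcop.abs_left.abs_right (odd_abs.mpr hXodd) (even_abs.mpr hYeven)
    (by simpa [Even.pow_abs (by decide : Even 4)] using heq)

lemma QuarticSq.exists_lt {x y z : ℤ} (h : QuarticSq x y z) :
    ∃ x' y' z', QuarticSq x' y' z' ∧ z'.natAbs < z.natAbs := by
  obtain ⟨hx, hy, heq⟩ := h
  obtain ⟨g, X, Y, hg, hXY, rfl, rfl⟩ := Int.exists_gcd_one' (Int.gcd_pos_of_ne_zero_left y hx)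
  obtain ⟨v, rfl, hv⟩ := Int.exists_eq_mul_and_eq_sq_of_sq_mul_eq_sq (g := (g : ℤ) ^ 2) (w := z)
    (a := X ^ 4 + X ^ 2 * Y ^ 2 + Y ^ 4) (by positivity) (by linear_combination heq)
  obtain ⟨x', y', z', h', hlt⟩ := QuarticSq.exists_lt_of_isCoprime
    ⟨left_ne_zero_of_mul hx, left_ne_zero_of_mul hy, hv⟩ (Int.isCoprime_iff_gcd_eq_one.mpr hXY)
  refine ⟨x', y', z', h', hlt.trans_le ?_⟩
  rw [Int.natAbs_mul]
  exact Nat.le_mul_of_pos_left _ (by positivity)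

theorem not_quarticSq (x y z : ℤ) : ¬QuarticSq x y z := by
  induction hn : z.natAbs using Nat.strong_induction_on generalizing x y z with
  | _ n ih =>
    intro h
    obtain ⟨x', y', z', h', hlt⟩ := h.exists_lt
    exact ih _ (hn ▸ hlt) x' y' z' rfl h'

lemma odd_sq_sub_sq_of_sq_sub_three_mul_sq_mul_add_sq_eq_sq {y t w : ℤ} (hcop : IsCoprime y t)
    (h : (y ^ 2 - 3 * t ^ 2) * (y ^ 2 + t ^ 2) = w ^ 2) : Odd (y ^ 2 - t ^ 2) := by
  rcases Int.even_or_odd y with hy | hy <;> rcases Int.even_or_odd t with ht | ht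
  · exact ((Int.odd_or_odd_of_isCoprime hcop).elim (Int.not_odd_iff_even.mpr hy)
      (Int.not_odd_iff_even.mpr ht)).elim
  · exact (Int.even_pow.mpr ⟨hy, two_ne_zero⟩).sub_odd ht.pow
  · exact hy.pow.sub_even (Int.even_pow.mpr ⟨ht, two_ne_zero⟩)
  · obtain ⟨i, rfl⟩ := hy
    obtain ⟨j, rfl⟩ := ht
    have h16 := congrArg (Int.cast : ℤ → ZMod 16) h
    push_cast at h16
    exact ((by decide : ∀ a b c : ZMod 16,
      ((2 * a + 1) ^ 2 - 3 * (2 * b + 1) ^ 2) * ((2 * a + 1) ^ 2 + (2 * b + 1) ^ 2) ≠ c ^ 2)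
      _ _ _ h16).elim

lemma sq_sub_three_mul_sq_mul_add_sq_ne_sq_of_isCoprime {y t w : ℤ} (hcop : IsCoprime y t)
    (ht : t ≠ 0) : (y ^ 2 - 3 * t ^ 2) * (y ^ 2 + t ^ 2) ≠ w ^ 2 := by
  intro h
  have hodd := odd_sq_sub_sq_of_sq_sub_three_mul_sq_mul_add_sq_eq_sq hcop h
  have hpos : 0 < y ^ 2 - t ^ 2 := by
    have hnonneg : 0 ≤ y ^ 2 - 3 * t ^ 2 :=
      nonneg_of_mul_nonneg_left (h ▸ sq_nonneg w) (by positivity)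
    have hodd' : Odd (y ^ 2 - 3 * t ^ 2) := by
      rw [show y ^ 2 - 3 * t ^ 2 = y ^ 2 - t ^ 2 - 2 * t ^ 2 by ring]
      exact hodd.sub_even (even_two_mul _)
    have hne : y ^ 2 - 3 * t ^ 2 ≠ 0 := fun h0 => by simp [h0] at hodd'
    linarith [lt_of_le_of_ne hnonneg hne.symm, sq_nonneg t]
  have hw : Odd w := by
    rw [← Int.odd_pow' two_ne_zero, show w ^ 2 = (y ^ 2 - t ^ 2) ^ 2 - 4 * t ^ 4 by
      linear_combination -h]
    exact hodd.pow.sub_even ⟨2 * t ^ 4, by ring⟩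
  have hwt : IsCoprime w t :=
    hcop.of_sq_eq_pow_add_mul (n := 4) (d := -2 * y ^ 2 * t - 3 * t ^ 3) (by linear_combination -h)
  have hpyth : PythagoreanTriple w (2 * t ^ 2) (y ^ 2 - t ^ 2) := by
    unfold PythagoreanTriple
    linear_combination -h
  obtain ⟨m, n, -, htmn, hsum, hmn, -, hm⟩ := hpyth.coprime_classification'
    (Int.isCoprime_iff_gcd_eq_one.mp ((Int.isCoprime_two_right.mpr hw).mul_right hwt.pow_right))
    (Int.odd_iff.mp hw) hpos
  replace htmn : m * n = t ^ 2 := by linarith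
  rw [← Int.isCoprime_iff_gcd_eq_one] at hmn
  have hn : 0 ≤ n := (pos_of_mul_pos_right (by rw [htmn]; positivity) hm).le
  obtain ⟨α, rfl⟩ := Int.exists_sq_of_isCoprime_of_mul_eq_sq hmn hm htmn
  obtain ⟨β, rfl⟩ :=
    Int.exists_sq_of_isCoprime_of_mul_eq_sq hmn.symm hn (c := t) (by linear_combination htmn)
  have hαβ : α ^ 2 * β ^ 2 ≠ 0 := htmn ▸ pow_ne_zero 2 ht
  exact not_quarticSq α β y ⟨fun hα => hαβ (by simp [hα]), fun hβ => hαβ (by simp [hβ]),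
    by linear_combination -hsum + htmn⟩

theorem sq_sub_three_mul_sq_mul_add_sq_ne_sq {y t w : ℤ} (ht : t ≠ 0) :
    (y ^ 2 - 3 * t ^ 2) * (y ^ 2 + t ^ 2) ≠ w ^ 2 := by
  intro h
  obtain ⟨g, Y, T, hg, hYT, rfl, rfl⟩ := Int.exists_gcd_one' (Int.gcd_pos_of_ne_zero_right y ht)
  obtain ⟨v, -, hv⟩ := Int.exists_eq_mul_and_eq_sq_of_sq_mul_eq_sq (g := (g : ℤ) ^ 2) (w := w)
    (a := (Y ^ 2 - 3 * T ^ 2) * (Y ^ 2 + T ^ 2)) (by positivity) (by linear_combination h)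
  exact sq_sub_three_mul_sq_mul_add_sq_ne_sq_of_isCoprime (Int.isCoprime_iff_gcd_eq_one.mpr hYT)
    (left_ne_zero_of_mul ht) hv

theorem sq_sub_mul_sub_sq_ne_mul_sq {n x y : ℤ} (hx : x ≠ 0) (hnx : n - x ≠ 0) :
    (y ^ 2 - x * (n - x)) ^ 2 ≠ x * (n - x) * n ^ 2 := by
  intro h
  have hn : n ≠ 0 := by
    rintro rfl
    have : y ^ 2 + x ^ 2 = 0 := by nlinarith
    exact hx (by nlinarith)
  obtain ⟨t, ht, hxt⟩ := Int.exists_eq_mul_and_eq_sq_of_sq_mul_eq_sq hn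
    (a := x * (n - x)) (w := y ^ 2 - x * (n - x)) (by linear_combination -h)
  have ht0 : t ≠ 0 := by
    rintro rfl
    exact mul_ne_zero hx hnx (by simpa using hxt)
  exact sq_sub_three_mul_sq_mul_add_sq_ne_sq ht0 (y := y) (w := t * (2 * x - n))
    (by linear_combination (y ^ 2 - t ^ 2 + n * t) * (ht + hxt) + 4 * t ^ 2 * hxt)

lemma sq_sub_mul_sub_sq_eq_of_div_sub_div_sub_div_eq_zero {K : Type*} [Field K] {n x y : K}
    (hn : n ≠ 0) (hxy : x ^ 2 + y ^ 2 ≠ 0) (hnxy : (n - x) ^ 2 + y ^ 2 ≠ 0)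
    (h : n / n ^ 2 - x / (x ^ 2 + y ^ 2) - (n - x) / ((n - x) ^ 2 + y ^ 2) = 0) :
    (y ^ 2 - x * (n - x)) ^ 2 = x * (n - x) * n ^ 2 := by
  field_simp at h
  linear_combination h

theorem no_resonance_on_axis_general (n₁ : ℤ) : ((n₁, 0) : ℤ × ℤ) ∉ Lambda := by
  rintro ⟨hn, x, y, hx, hnx, h⟩
  have hxy : (x : ℚ) ^ 2 + (y : ℚ) ^ 2 ≠ 0 := by positivity
  have hnxy : ((n₁ : ℚ) - x) ^ 2 + (y : ℚ) ^ 2 ≠ 0 := by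
    have : (n₁ : ℚ) - x ≠ 0 := by exact_mod_cast hnx
    positivity
  refine sq_sub_mul_sub_sq_ne_mul_sq hx hnx (y := y) ?_
  exact_mod_cast sq_sub_mul_sub_sq_eq_of_div_sub_div_sub_div_eq_zero (by exact_mod_cast hn) hxy
    hnxy (by simpa using h)

theorem no_resonance_on_axis (n₁ : ℤ) (hn : n₁ ≠ 0) : ((n₁, 0) : ℤ × ℤ) ∉ Lambda :=
  no_resonance_on_axis_general n₁
end
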